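/- arXiv:1302.1603 — 2 statements merged into one kernel-verified Lean document; each statement's English description precedes it below -/
import Mathlib

section
/- Let B ⊂ ℝⁿ be an open ball centered at 0 and let u : B → ℝ be continuous and superharmonic (with respect to the Euclidean Laplacian). Then the minimal radial function v(x) := min_{‖y‖ = ‖x‖} u(y) is superharmonic on B. -/
open MeasureTheory Filter Topology

/-- `u` is superharmonic on `Ω ⊆ ℝⁿ`: lower semicontinuous on `Ω` and, for every closed
ball contained in `Ω`, `u x` is at least the average of `u` over the boundary sphere. -/
def Superharmonic (n : ℕ) (Ω : Set (EuclideanSpace ℝ (Fin n)))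
    (u : EuclideanSpace ℝ (Fin n) → ℝ) : Prop :=
  LowerSemicontinuousOn u Ω ∧
    ∀ x ∈ Ω, ∀ ρ > (0 : ℝ), Metric.closedBall x ρ ⊆ Ω →
      (⨍ y in Metric.sphere x ρ, u y ∂(μH[(n : ℝ) - 1])) ≤ u x

/-!
For `y` on the sphere `‖·‖ = ‖x‖` there is a reflection `e` of `ℝⁿ` with `e x = y`. Since `e`
preserves `B`, spheres and Hausdorff measure, `z ↦ u (e z)` is superharmonic, so the mean of
`v ≤ u ∘ e` over a sphere around `x` is at most `u (e x) = u y`; taking `y` a minimiser gives the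
mean value inequality for `v`. Lower semicontinuity of `v` comes from its continuity: rescaling a
minimiser for `b` to the sphere through `a` moves it by at most `dist a b`, so `v` inherits the
uniform continuity of `u` on closed balls.
-/

open Metric

theorem exists_mem_sphere_dist_le_of_norm_eq {E : Type*} [NormedAddCommGroup E]
    [NormedSpace ℝ E] (a : E) {b y : E} (hy : ‖y‖ = ‖b‖) :
    ∃ y' ∈ sphere (0 : E) ‖a‖, dist y' y ≤ dist a b := by
  rcases eq_or_ne ‖b‖ 0 with hb | hb
  · refine ⟨a, mem_sphere_zero_iff_norm.2 rfl, ?_⟩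
    rw [norm_eq_zero.1 (hy.trans hb), norm_eq_zero.1 hb]
  refine ⟨(‖a‖ / ‖b‖) • y, ?_, ?_⟩
  · rw [mem_sphere_zero_iff_norm, norm_smul, hy, Real.norm_of_nonneg (by positivity),
      div_mul_cancel₀ _ hb]
  calc dist ((‖a‖ / ‖b‖) • y) y = ‖(‖a‖ / ‖b‖ - 1) • y‖ := by
        rw [dist_eq_norm, sub_smul, one_smul]
    _ = |‖a‖ - ‖b‖| := by
        rw [norm_smul, Real.norm_eq_abs, hy, ← abs_norm b, ← abs_mul, abs_norm, sub_mul,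
          div_mul_cancel₀ _ hb, one_mul]
    _ ≤ dist a b := by rw [dist_eq_norm]; exact abs_norm_sub_norm_le a b

section MinimalRadial

variable {E : Type*} [NormedAddCommGroup E] [NormedSpace ℝ E] {u v : E → ℝ}

theorem uniformContinuousOn_of_isLeast_image_sphere {r : ℝ}
    (hu : UniformContinuousOn u (closedBall 0 r))
    (hv : ∀ x ∈ closedBall (0 : E) r, IsLeast (u '' sphere 0 ‖x‖) (v x)) :
    UniformContinuousOn v (closedBall 0 r) := by
  have hsphere : ∀ x ∈ closedBall (0 : E) r, sphere (0 : E) ‖x‖ ⊆ closedBall 0 r := fun x hx =>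
    sphere_subset_closedBall.trans (closedBall_subset_closedBall (mem_closedBall_zero_iff.1 hx))
  rw [Metric.uniformContinuousOn_iff] at hu ⊢
  intro ε hε
  obtain ⟨δ, hδ, hδu⟩ := hu (ε / 2) (half_pos hε)
  have hle : ∀ a ∈ closedBall (0 : E) r, ∀ b ∈ closedBall (0 : E) r, dist a b < δ →
      v a ≤ v b + ε / 2 := by
    intro a ha b hb hab
    obtain ⟨⟨y, hy, hyb⟩, -⟩ := hv b hb
    obtain ⟨y', hy', hy'y⟩ := exists_mem_sphere_dist_le_of_norm_eq a (mem_sphere_zero_iff_norm.1 hy)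
    have hu_close := hδu y' (hsphere a ha hy') y (hsphere b hb hy) (hy'y.trans_lt hab)
    rw [Real.dist_eq, abs_sub_lt_iff] at hu_close
    calc v a ≤ u y' := (hv a ha).2 ⟨y', hy', rfl⟩
      _ ≤ v b + ε / 2 := by linarith
  refine ⟨δ, hδ, fun a ha b hb hab => ?_⟩
  have hba := hle b hb a ha (dist_comm a b ▸ hab)
  rw [Real.dist_eq, abs_sub_lt_iff]
  constructor <;> linarith [hle a ha b hb hab]

theorem continuousOn_ball_of_isLeast_image_sphere [ProperSpace E] {R : ℝ}
    (hu : ContinuousOn u (ball 0 R))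
    (hv : ∀ x ∈ ball (0 : E) R, IsLeast (u '' sphere 0 ‖x‖) (v x)) :
    ContinuousOn v (ball 0 R) := by
  intro x hx
  obtain ⟨r, hxr, hrR⟩ := exists_between (mem_ball_zero_iff.1 hx)
  have hsub : closedBall (0 : E) r ⊆ ball 0 R := closedBall_subset_ball hrR
  have hv_unif := uniformContinuousOn_of_isLeast_image_sphere
    ((isCompact_closedBall 0 r).uniformContinuousOn_of_continuous (hu.mono hsub))
    fun y hy => hv y (hsub hy)
  exact (hv_unif.continuousOn.continuousAt
    (closedBall_mem_nhds_of_mem (mem_ball_zero_iff.2 hxr))).continuousWithinAt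

end MinimalRadial

theorem MeasureTheory.MeasurePreserving.setAverage_preimage_emb {α β E : Type*}
    [MeasurableSpace α] [MeasurableSpace β] [NormedAddCommGroup E] [NormedSpace ℝ E]
    {μ : Measure α} {ν : Measure β} {e : α → β} (he : MeasurePreserving e μ ν)
    (hemb : MeasurableEmbedding e) (f : β → E) (s : Set β) :
    ⨍ x in e ⁻¹' s, f (e x) ∂μ = ⨍ y in s, f y ∂ν := by
  rw [setAverage_eq, setAverage_eq, he.setIntegral_preimage_emb hemb, measureReal_def,
    measureReal_def, he.measure_preimage_emb hemb]

theorem setAverage_mono_of_isCompact {α : Type*} [TopologicalSpace α] [T2Space α]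
    [MeasurableSpace α] [OpensMeasurableSpace α] {μ : Measure α} {s : Set α} (hs : IsCompact s)
    {f g : α → ℝ} (hf : ContinuousOn f s) (hg : ContinuousOn g s) (hfg : ∀ x ∈ s, f x ≤ g x) :
    ⨍ x in s, f x ∂μ ≤ ⨍ x in s, g x ∂μ := by
  rw [setAverage_eq, setAverage_eq]
  rcases eq_or_ne (μ s) ⊤ with hμ | hμ
  · simp [measureReal_def, hμ]
  exact smul_le_smul_of_nonneg_left
    (setIntegral_mono_on (hf.integrableOn_of_subset_isCompact hs hs.measurableSet le_rfl hμ)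
      (hg.integrableOn_of_subset_isCompact hs hs.measurableSet le_rfl hμ) hs.measurableSet hfg)
    (by positivity)

theorem stmt_5_general (n : ℕ) (R : ℝ)
    (u v : EuclideanSpace ℝ (Fin n) → ℝ)
    (hu_cont : ContinuousOn u (Metric.ball (0 : EuclideanSpace ℝ (Fin n)) R))
    (hu_sh : Superharmonic n (Metric.ball (0 : EuclideanSpace ℝ (Fin n)) R) u)
    (hv : ∀ x ∈ Metric.ball (0 : EuclideanSpace ℝ (Fin n)) R,
      IsLeast (u '' Metric.sphere (0 : EuclideanSpace ℝ (Fin n)) ‖x‖) (v x)) :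
    Superharmonic n (Metric.ball (0 : EuclideanSpace ℝ (Fin n)) R) v := by
  have hv_cont := continuousOn_ball_of_isLeast_image_sphere hu_cont hv
  refine ⟨hv_cont.lowerSemicontinuousOn, fun x hx ρ hρ hball => ?_⟩
  obtain ⟨⟨y, hy, hyx⟩, -⟩ := hv x hx
  set e := Submodule.reflection (ℝ ∙ (x - y))ᗮ
  have hex : e x = y := Submodule.reflection_sub (mem_sphere_zero_iff_norm.1 hy).symm
  have he_ball : e '' ball 0 R = ball 0 R := by rw [e.image_ball, map_zero]
  have hball_y : closedBall y ρ ⊆ ball 0 R := by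
    rw [← hex, ← e.image_closedBall, ← he_ball]
    exact Set.image_mono hball
  have hsphere : sphere x ρ ⊆ ball 0 R := sphere_subset_closedBall.trans hball
  have he_sphere : e ⁻¹' sphere y ρ = sphere x ρ := by
    rw [← hex, e.preimage_sphere, e.symm_apply_apply]
  calc ⨍ z in sphere x ρ, v z ∂μH[(n : ℝ) - 1]
      ≤ ⨍ z in sphere x ρ, u (e z) ∂μH[(n : ℝ) - 1] :=
        setAverage_mono_of_isCompact (isCompact_sphere x ρ) (hv_cont.mono hsphere)
          (hu_cont.comp e.continuous.continuousOn
            fun z hz => he_ball ▸ Set.mem_image_of_mem e (hsphere hz))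
          fun z hz => (hv z (hsphere hz)).2 ⟨e z, by simp, rfl⟩
    _ = ⨍ w in sphere y ρ, u w ∂μH[(n : ℝ) - 1] := by
        rw [← he_sphere]
        exact (e.toIsometryEquiv.measurePreserving_hausdorffMeasure _).setAverage_preimage_emb
          e.toHomeomorph.measurableEmbedding u _
    _ ≤ u y := hu_sh.2 y (hball_y (mem_closedBall_self hρ.le)) ρ hρ hball_y
    _ = v x := hyx

/-- If `u` is continuous and superharmonic on a ball `B` centered at `0` in `ℝⁿ`, then the
minimal radial function `v x = min_{‖y‖ = ‖x‖} u y` is superharmonic on `B`. -/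
theorem stmt_5 (n : ℕ) (R : ℝ) (hR : 0 < R)
    (u v : EuclideanSpace ℝ (Fin n) → ℝ)
    (hu_cont : ContinuousOn u (Metric.ball (0 : EuclideanSpace ℝ (Fin n)) R))
    (hu_sh : Superharmonic n (Metric.ball (0 : EuclideanSpace ℝ (Fin n)) R) u)
    (hv : ∀ x ∈ Metric.ball (0 : EuclideanSpace ℝ (Fin n)) R,
      IsLeast (u '' Metric.sphere (0 : EuclideanSpace ℝ (Fin n)) ‖x‖) (v x)) :
    Superharmonic n (Metric.ball (0 : EuclideanSpace ℝ (Fin n)) R) v :=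
  stmt_5_general n R u v hu_cont hu_sh hv
end

section
/- Let n ≥ 3 and let h : ℝⁿ \ {0} → ℝ be continuous. Suppose that for every 0 < r < 1 the rescaled functions h⁽ʳ⁾(x) := h(rx) are uniformly bounded and equicontinuous on the closed annulus {1 ≤ ‖x‖ ≤ 2}, and that lim_{r→0⁺} r^{-n} ∫_{r<‖x‖<2r} |h(x)| dx = 0. Then h(x) → 0 as x → 0. -/
/-!
Suppose `|h x| ≥ ε` with `r = ‖x‖` small. By equicontinuity of the rescalings, `|h (r • y)| ≥ ε / 2`
on a ball `B` of fixed radius inside the unit annulus near `x / r`, so the integral of `|h|` over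
`{r < ‖x‖ < 2r}` is at least `(ε / 2) rⁿ vol(B)`, contradicting the assumed `o(rⁿ)` decay.
-/

open MeasureTheory Measure Filter Topology Metric Pointwise Module

section Rescaling

variable {E : Type*} [NormedAddCommGroup E] [NormedSpace ℝ E]

lemma mem_annulus_of_mem_ball_one_add_smul {u y : E} {ρ : ℝ} (hu : ‖u‖ = 1) (hρ : ρ ≤ 1 / 2)
    (hy : y ∈ ball ((1 + ρ) • u) (ρ / 2)) : 1 < ‖y‖ ∧ ‖y‖ < 2 ∧ ‖y - u‖ < 2 * ρ := by
  have hyz : ‖y - (1 + ρ) • u‖ < ρ / 2 := mem_ball_iff_norm.1 hy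
  have hρ0 : 0 < ρ := by linarith [norm_nonneg (y - (1 + ρ) • u)]
  have hz : ‖(1 + ρ) • u‖ = 1 + ρ := by
    rw [norm_smul, hu, mul_one, Real.norm_of_nonneg (by linarith)]
  have hzu : ‖(1 + ρ) • u - u‖ = ρ := by
    rw [add_smul, one_smul, add_sub_cancel_left, norm_smul, hu, mul_one,
      Real.norm_of_nonneg hρ0.le]
  have hnorm := abs_le.1 ((abs_norm_sub_norm_le y ((1 + ρ) • u)).trans hyz.le)
  rw [hz] at hnorm
  have htri := norm_sub_le_norm_sub_add_norm_sub y ((1 + ρ) • u) u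
  refine ⟨?_, ?_, ?_⟩ <;> linarith [hnorm.1, hnorm.2]

variable [FiniteDimensional ℝ E] [MeasurableSpace E] [BorelSpace E]
  (μ : Measure E) [μ.IsAddHaarMeasure]

lemma integrableOn_annulus_of_continuousOn {f : E → ℝ} (hf : ContinuousOn f {x | x ≠ 0})
    {a : ℝ} (ha : 0 < a) (b : ℝ) : IntegrableOn f {x | a < ‖x‖ ∧ ‖x‖ < b} μ := by
  have hK : IsCompact ({x : E | a ≤ ‖x‖} ∩ closedBall 0 b) :=
    (isCompact_closedBall (0 : E) b).inter_left (isClosed_le continuous_const continuous_norm)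
  refine ((hf.mono fun x hx => ?_).integrableOn_compact hK).mono_set fun x hx => ?_
  · exact norm_pos_iff.1 (ha.trans_le hx.1)
  · exact ⟨hx.1.le, mem_closedBall_zero_iff.2 hx.2.le⟩

lemma mul_pow_mul_measureReal_le_setIntegral_annulus {h : E → ℝ}
    (hcont : ContinuousOn h {x | x ≠ 0}) {r η : ℝ} (hr : 0 < r) {B : Set E} (hB : MeasurableSet B)
    (hBA : B ⊆ {y | 1 < ‖y‖ ∧ ‖y‖ < 2}) (hηB : ∀ y ∈ B, η ≤ |h (r • y)|) :
    η * (r ^ finrank ℝ E * μ.real B) ≤ ∫ x in {x : E | r < ‖x‖ ∧ ‖x‖ < 2 * r}, |h x| ∂μ := by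
  have hrB : r • B ⊆ {x : E | r < ‖x‖ ∧ ‖x‖ < 2 * r} := by
    rintro _ ⟨y, hy, rfl⟩
    obtain ⟨hy1, hy2⟩ := hBA hy
    rw [Set.mem_ofPred_eq, norm_smul, Real.norm_of_nonneg hr.le]
    constructor <;> nlinarith
  have hμB : μ B ≠ ⊤ :=
    ((isBounded_ball (x := (0 : E)) (r := 2)).subset fun y hy =>
      mem_ball_zero_iff.2 (hBA hy).2).measure_lt_top.ne
  have hvol : μ.real (r • B) = r ^ finrank ℝ E * μ.real B := by
    rw [measureReal_def, addHaar_smul_of_nonneg μ hr.le, ENNReal.toReal_mul,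
      ENNReal.toReal_ofReal (by positivity), measureReal_def]
  have hint := integrableOn_annulus_of_continuousOn μ hcont.abs hr (2 * r)
  calc η * (r ^ finrank ℝ E * μ.real B) = η * μ.real (r • B) := by rw [hvol]
    _ ≤ ∫ x in r • B, |h x| ∂μ := by
      refine setIntegral_ge_of_const_le_real (hB.const_smul₀ r) ?_ ?_ (hint.mono_set hrB)
      · rw [addHaar_smul]; exact ENNReal.mul_ne_top ENNReal.ofReal_ne_top hμB
      · rintro _ ⟨y, hy, rfl⟩; exact hηB y hy
    _ ≤ _ := setIntegral_mono_set hint (ae_of_all _ fun _ => abs_nonneg _) hrB.eventuallyLE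

lemma mul_pow_mul_measureReal_ball_le_setIntegral_annulus {h : E → ℝ}
    (hcont : ContinuousOn h {x | x ≠ 0}) {x : E} (hx : x ≠ 0) {δ η ρ : ℝ}
    (hequi : ∀ y z : E, 1 ≤ ‖y‖ → ‖y‖ ≤ 2 → 1 ≤ ‖z‖ → ‖z‖ ≤ 2 →
      ‖y - z‖ < δ → |h (‖x‖ • y) - h (‖x‖ • z)| < η)
    (hρδ : 2 * ρ ≤ δ) (hρ : ρ ≤ 1 / 2) (hηx : 2 * η ≤ |h x|) :
    η * (‖x‖ ^ finrank ℝ E * μ.real (ball 0 (ρ / 2))) ≤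
      ∫ y in {y : E | ‖x‖ < ‖y‖ ∧ ‖y‖ < 2 * ‖x‖}, |h y| ∂μ := by
  have hr : 0 < ‖x‖ := norm_pos_iff.2 hx
  set u : E := ‖x‖⁻¹ • x
  have hu : ‖u‖ = 1 := by rw [norm_smul, norm_inv, norm_norm, inv_mul_cancel₀ hr.ne']
  have hru : ‖x‖ • u = x := smul_inv_smul₀ hr.ne' x
  have hB := fun y (hy : y ∈ ball ((1 + ρ) • u) (ρ / 2)) =>
    mem_annulus_of_mem_ball_one_add_smul hu hρ hy
  rw [measureReal_def, ← addHaar_ball_center μ ((1 + ρ) • u), ← measureReal_def]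
  refine mul_pow_mul_measureReal_le_setIntegral_annulus μ hcont hr measurableSet_ball
    (fun y hy => ⟨(hB y hy).1, (hB y hy).2.1⟩) fun y hy => ?_
  obtain ⟨hy1, hy2, hyu⟩ := hB y hy
  have hclose := hequi y u hy1.le hy2.le hu.ge (by rw [hu]; norm_num) (hyu.trans_le hρδ)
  rw [hru] at hclose
  linarith [abs_sub_abs_le_abs_sub (h x) (h (‖x‖ • y)), abs_sub_comm (h x) (h (‖x‖ • y))]

theorem tendsto_nhdsNE_zero_of_equicontinuous_rescalings {h : E → ℝ}
    (hcont : ContinuousOn h {x | x ≠ 0})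
    (hequi : ∀ ε > (0 : ℝ), ∃ δ > (0 : ℝ), ∀ r ∈ Set.Ioo (0 : ℝ) 1,
      ∀ x y : E, 1 ≤ ‖x‖ → ‖x‖ ≤ 2 → 1 ≤ ‖y‖ → ‖y‖ ≤ 2 →
        ‖x - y‖ < δ → |h (r • x) - h (r • y)| < ε)
    (hint : Tendsto (fun r : ℝ =>
        (∫ x in {x : E | r < ‖x‖ ∧ ‖x‖ < 2 * r}, |h x| ∂μ) / r ^ finrank ℝ E)
      (𝓝[>] (0 : ℝ)) (𝓝 0)) :
    Tendsto h (𝓝[≠] (0 : E)) (𝓝 0) := by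
  rw [Metric.tendsto_nhdsWithin_nhds]
  intro ε hε
  obtain ⟨δ, hδ, hδequi⟩ := hequi (ε / 2) (half_pos hε)
  set ρ : ℝ := min (δ / 2) (1 / 2)
  set c : ℝ := μ.real (ball (0 : E) (ρ / 2))
  have hc : 0 < ε / 2 * c := mul_pos (half_pos hε)
    (ENNReal.toReal_pos (measure_ball_pos μ _ (by positivity)).ne' measure_ball_lt_top.ne)
  obtain ⟨r₀, hr₀, hsmall⟩ := mem_nhdsGT_iff_exists_Ioo_subset.1
    ((hint.eventually_lt_const hc).and (Ioo_mem_nhdsGT one_pos))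
  refine ⟨r₀, hr₀, fun x hx hxr₀ => ?_⟩
  rw [dist_zero_right] at hxr₀
  rw [Real.dist_eq, sub_zero]
  by_contra! hεx
  have hr : 0 < ‖x‖ := norm_pos_iff.2 hx
  obtain ⟨hI, -, hr1⟩ := hsmall ⟨hr, hxr₀⟩
  have hbound := mul_pow_mul_measureReal_ball_le_setIntegral_annulus μ hcont hx
    (hδequi _ ⟨hr, hr1⟩) ((le_div_iff₀' two_pos).1 (min_le_left _ _)) (min_le_right _ _)
    (by linarith)
  rw [div_lt_iff₀ (by positivity)] at hI
  exact hbound.not_gt (hI.trans_eq (by ring))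

end Rescaling

theorem stmt_7_general (n : ℕ) (h : EuclideanSpace ℝ (Fin n) → ℝ)
    (hcont : ContinuousOn h {x | x ≠ 0})
    (hequi : ∀ ε > (0 : ℝ), ∃ δ > (0 : ℝ), ∀ r ∈ Set.Ioo (0 : ℝ) 1,
      ∀ x y : EuclideanSpace ℝ (Fin n), 1 ≤ ‖x‖ → ‖x‖ ≤ 2 → 1 ≤ ‖y‖ → ‖y‖ ≤ 2 →
        ‖x - y‖ < δ → |h (r • x) - h (r • y)| < ε)
    (hint : Tendsto (fun r : ℝ =>
        (∫ x in {x : EuclideanSpace ℝ (Fin n) | r < ‖x‖ ∧ ‖x‖ < 2 * r}, |h x|) / r ^ n)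
      (𝓝[>] (0 : ℝ)) (𝓝 0)) :
    Tendsto h (𝓝[≠] (0 : EuclideanSpace ℝ (Fin n))) (𝓝 0) :=
  tendsto_nhdsNE_zero_of_equicontinuous_rescalings volume hcont hequi
    (by rwa [finrank_euclideanSpace_fin])

/-- If the rescalings `x ↦ h (r x)` of a continuous `h : ℝⁿ \ {0} → ℝ` (`n ≥ 3`) are
uniformly bounded and equicontinuous on the annulus `{1 ≤ ‖x‖ ≤ 2}` for `0 < r < 1`, and
`r⁻ⁿ ∫_{r<‖x‖<2r} |h| dx → 0` as `r → 0⁺`, then `h x → 0` as `x → 0`. -/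
theorem stmt_7 (n : ℕ) (hn : 3 ≤ n) (h : EuclideanSpace ℝ (Fin n) → ℝ)
    (hcont : ContinuousOn h {x | x ≠ 0})
    (hbdd : ∃ M : ℝ, ∀ r ∈ Set.Ioo (0 : ℝ) 1, ∀ x : EuclideanSpace ℝ (Fin n),
      1 ≤ ‖x‖ → ‖x‖ ≤ 2 → |h (r • x)| ≤ M)
    (hequi : ∀ ε > (0 : ℝ), ∃ δ > (0 : ℝ), ∀ r ∈ Set.Ioo (0 : ℝ) 1,
      ∀ x y : EuclideanSpace ℝ (Fin n), 1 ≤ ‖x‖ → ‖x‖ ≤ 2 → 1 ≤ ‖y‖ → ‖y‖ ≤ 2 →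
        ‖x - y‖ < δ → |h (r • x) - h (r • y)| < ε)
    (hint : Tendsto (fun r : ℝ =>
        (∫ x in {x : EuclideanSpace ℝ (Fin n) | r < ‖x‖ ∧ ‖x‖ < 2 * r}, |h x|) / r ^ n)
      (𝓝[>] (0 : ℝ)) (𝓝 0)) :
    Tendsto h (𝓝[≠] (0 : EuclideanSpace ℝ (Fin n))) (𝓝 0) :=
  stmt_7_general n h hcont hequi hint
end
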